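/- For natural i ≥ 1, the double integral ∫₀^R ∫₀^{√(R²−x²)} (R² − x² − y²)^{(i−2)/2} dy dx equals R^i · P_i · P_{i−1}, where P_j = ∫₀¹ (1 − t²)^{(j−1)/2} dt. -/
import Mathlib


open Real intervalIntegral

noncomputable def P (j : ℕ) : ℝ := ∫ t in (0:ℝ)..1, (1 - t ^ 2) ^ (((j : ℝ) - 1) / 2)

lemma lem1 (a p : ℝ) (ha : 0 ≤ a) :
    (∫ y in (0:ℝ)..a, (a ^ 2 - y ^ 2) ^ p)
      = a * (a ^ 2) ^ p * ∫ t in (0:ℝ)..1, (1 - t ^ 2) ^ p := by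
  have h : (∫ y in (0:ℝ)..a, (a ^ 2 - y ^ 2) ^ p)
      = a • ∫ t in (0:ℝ)..1, (a ^ 2 - (a * t) ^ 2) ^ p := by
    rw [intervalIntegral.smul_integral_comp_mul_left (fun y => (a ^ 2 - y ^ 2) ^ p) a]
    norm_num
  rw [h]
  have h2 : ∀ t ∈ Set.uIcc (0:ℝ) 1,
      (a ^ 2 - (a * t) ^ 2) ^ p = (a ^ 2) ^ p * (1 - t ^ 2) ^ p := by
    intro t ht
    rw [Set.uIcc_of_le zero_le_one] at ht
    have h1 : (0:ℝ) ≤ 1 - t ^ 2 := by nlinarith [ht.1, ht.2]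
    rw [show a ^ 2 - (a * t) ^ 2 = a ^ 2 * (1 - t ^ 2) by ring,
      Real.mul_rpow (sq_nonneg a) h1]
  rw [intervalIntegral.integral_congr h2, intervalIntegral.integral_const_mul,
    smul_eq_mul]
  ring

theorem stmt_14 (i : ℕ) (hi : 1 ≤ i) (R : ℝ) (hR : 0 < R) :
    (∫ x in (0:ℝ)..R, ∫ y in (0:ℝ)..Real.sqrt (R ^ 2 - x ^ 2),
        (R ^ 2 - x ^ 2 - y ^ 2) ^ (((i : ℝ) - 2) / 2)) =
      R ^ i * P i * P (i - 1) := by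
  have hP1 : P (i - 1) = ∫ t in (0:ℝ)..1, (1 - t ^ 2) ^ (((i : ℝ) - 2) / 2) := by
    unfold P
    rw [Nat.cast_sub hi]
    norm_num [sub_sub]
  have key : ∀ x ∈ Set.uIcc (0:ℝ) R,
      (∫ y in (0:ℝ)..Real.sqrt (R ^ 2 - x ^ 2),
          (R ^ 2 - x ^ 2 - y ^ 2) ^ (((i : ℝ) - 2) / 2))
        = Real.sqrt (R ^ 2 - x ^ 2) * (R ^ 2 - x ^ 2) ^ (((i : ℝ) - 2) / 2)
            * P (i - 1) := by
    intro x hx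
    rw [Set.uIcc_of_le hR.le] at hx
    have hx2 : (0:ℝ) ≤ R ^ 2 - x ^ 2 := by nlinarith [hx.1, hx.2]
    have h := lem1 (Real.sqrt (R ^ 2 - x ^ 2)) (((i : ℝ) - 2) / 2) (Real.sqrt_nonneg _)
    rw [Real.sq_sqrt hx2] at h
    rw [h, hP1]
  rw [intervalIntegral.integral_congr key, intervalIntegral.integral_mul_const]
  have hsqrt : ∀ᵐ x ∂(MeasureTheory.volume), x ∈ Set.uIoc (0:ℝ) R →
      Real.sqrt (R ^ 2 - x ^ 2) * (R ^ 2 - x ^ 2) ^ (((i : ℝ) - 2) / 2)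
        = (R ^ 2 - x ^ 2) ^ (((i : ℝ) - 1) / 2) := by
    have hne : ∀ᵐ x ∂(MeasureTheory.volume), x ≠ R := by
      rw [MeasureTheory.ae_iff]
      simp [show {x : ℝ | ¬x ≠ R} = {R} by ext x; simp]
    filter_upwards [hne] with x hx hmem
    rw [Set.uIoc_of_le hR.le] at hmem
    have hlt : x < R := lt_of_le_of_ne hmem.2 hx
    have hz : (0:ℝ) < R ^ 2 - x ^ 2 := by nlinarith [hmem.1, hmem.2]
    rw [Real.sqrt_eq_rpow, ← Real.rpow_add hz]
    congr 1
    ring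
  rw [intervalIntegral.integral_congr_ae hsqrt, lem1 R (((i : ℝ) - 1) / 2) hR.le]
  have hR2 : R * (R ^ 2) ^ (((i : ℝ) - 1) / 2) = R ^ i := by
    rw [← Real.rpow_natCast R 2, ← Real.rpow_mul hR.le, ← Real.rpow_natCast R i,
      ← Real.rpow_one_add' (by positivity)
      (by
        have h1 : (1:ℝ) ≤ i := by exact_mod_cast hi
        intro h
        push_cast at h
        nlinarith)]
    · congr 1
      push_cast
      ring
  rw [show (∫ t in (0:ℝ)..1, (1 - t ^ 2) ^ (((i : ℝ) - 1) / 2)) = P i from rfl]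
  rw [hR2]
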